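/- For all B, B' ∈ 𝓑, price_C(B, B') = |B' \ B|. -/

import Mathlib

open Finset

variable {V : Type*} [Fintype V] [DecidableEq V]

/-- A pure Horn CNF is a finite set of clauses `(B, v)`: body `B`, head `v`,
with `B` nonempty and `v ∉ B`. -/
def PureHorn (Φ : Finset (Finset V × V)) : Prop :=
  ∀ c ∈ Φ, c.1.Nonempty ∧ c.2 ∉ c.1

/-- A set `W` is closed under the clauses of `Φ`. -/
def HornClosed (Φ : Finset (Finset V × V)) (W : Set V) : Prop :=
  ∀ c ∈ Φ, ↑c.1 ⊆ W → c.2 ∈ W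

/-- Forward-chaining closure `F_Φ(Z)`: the smallest set containing `Z`
that is closed under the clauses of `Φ`. -/
def hornClosure (Φ : Finset (Finset V × V)) (Z : Set V) : Set V :=
  ⋂₀ {W : Set V | Z ⊆ W ∧ HornClosed Φ W}

/-- `Ψ_𝓑 = ⋀_{B ∈ 𝓑} B → (V \ B)`. -/
def keyCNF (𝓑 : Finset (Finset V)) : Finset (Finset V × V) :=
  𝓑.biUnion fun B => (Finset.univ \ B).image fun v => (B, v)

/-- `Φ` represents the key Horn function `h_𝓑`, i.e. `Φ` is a pure Horn CNF
equivalent to `Ψ_𝓑`. -/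
def Represents (𝓑 : Finset (Finset V)) (Φ : Finset (Finset V × V)) : Prop :=
  PureHorn Φ ∧ ∀ Z : Finset V, hornClosure Φ ↑Z = hornClosure (keyCNF 𝓑) ↑Z

/-- (B) number of (distinct) bodies. -/
def sizeB (Φ : Finset (Finset V × V)) : ℕ := (Φ.image Prod.fst).card
/-- (BA) body area `Σ_i |B_i|` over the distinct bodies. -/
def sizeBA (Φ : Finset (Finset V × V)) : ℕ := ∑ B ∈ Φ.image Prod.fst, B.card
/-- (C) number of clauses `Σ_i |H_i|`. -/
def sizeC (Φ : Finset (Finset V × V)) : ℕ := Φ.card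
/-- (TA) total area `Σ_i (|B_i| + |H_i|)`. -/
def sizeTA (Φ : Finset (Finset V × V)) : ℕ := sizeBA Φ + sizeC Φ
/-- (BC) bodies plus clauses `Σ_i (|H_i| + 1)`. -/
def sizeBC (Φ : Finset (Finset V × V)) : ℕ := sizeB Φ + sizeC Φ
/-- (L) number of literals `Σ_i (|B_i| + 1)·|H_i|`. -/
def sizeL (Φ : Finset (Finset V × V)) : ℕ := ∑ c ∈ Φ, (c.1.card + 1)

/-- `μ` is one of the six size measures. -/
def IsMeasure (μ : Finset (Finset V × V) → ℕ) : Prop :=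
  μ = sizeB ∨ μ = sizeBA ∨ μ = sizeTA ∨ μ = sizeC ∨ μ = sizeBC ∨ μ = sizeL

/-- `OPT_μ(𝓑)`: minimum `μ`-size of a CNF representing `h_𝓑`. -/
noncomputable def OPT (μ : Finset (Finset V × V) → ℕ) (𝓑 : Finset (Finset V)) : ℕ :=
  sInf {s : ℕ | ∃ Φ : Finset (Finset V × V), Represents 𝓑 Φ ∧ μ Φ = s}

/-- `price_μ(S,T)`: minimum `μ`-size of a pure Horn CNF with bodies in `𝓑`
whose forward chaining from `S` reaches all of `T`. -/
noncomputable def price (μ : Finset (Finset V × V) → ℕ) (𝓑 : Finset (Finset V))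
    (S T : Finset V) : ℕ :=
  sInf {s : ℕ | ∃ Φ : Finset (Finset V × V),
    PureHorn Φ ∧ (∀ c ∈ Φ, c.1 ∈ 𝓑) ∧ ↑T ⊆ hornClosure Φ ↑S ∧ μ Φ = s}

/-!
Forward chaining only ever adds heads of clauses, so a CNF reaching `T` from `S` has at least
`|T \ S|` clauses; the clauses `S → v` for `v ∈ T \ S` attain this, and they are admissible
as soon as `S` is a nonempty body of `𝓑`.
-/

omit [Fintype V]

omit [DecidableEq V] in
theorem subset_hornClosure (Φ : Finset (Finset V × V)) (Z : Set V) : Z ⊆ hornClosure Φ Z :=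
  fun _ hz _ hW => hW.1 hz

omit [DecidableEq V] in
theorem hornClosure_subset {Φ : Finset (Finset V × V)} {Z W : Set V} (hZW : Z ⊆ W)
    (hW : HornClosed Φ W) : hornClosure Φ Z ⊆ W :=
  Set.sInter_subset_of_mem ⟨hZW, hW⟩

theorem hornClosure_subset_union_heads (Φ : Finset (Finset V × V)) (Z : Set V) :
    hornClosure Φ Z ⊆ Z ∪ ↑(Φ.image Prod.snd) :=
  hornClosure_subset Set.subset_union_left fun _ hc _ =>
    Or.inr (Finset.mem_image_of_mem _ hc)

theorem card_sdiff_le_card_of_subset_hornClosure {Φ : Finset (Finset V × V)} {S T : Finset V}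
    (hT : ↑T ⊆ hornClosure Φ ↑S) : (T \ S).card ≤ Φ.card := by
  have hheads : T \ S ⊆ Φ.image Prod.snd := fun v hv => by
    rw [Finset.mem_sdiff] at hv
    simpa [hv.2] using hornClosure_subset_union_heads Φ _ (hT hv.1)
  exact (Finset.card_le_card hheads).trans Finset.card_image_le

def starCNF (S T : Finset V) : Finset (Finset V × V) :=
  (T \ S).image fun v => (S, v)

theorem card_starCNF (S T : Finset V) : (starCNF S T).card = (T \ S).card :=
  Finset.card_image_of_injective _ fun _ _ h => (Prod.mk.inj h).2

theorem pureHorn_starCNF {S : Finset V} (hS : S.Nonempty) (T : Finset V) :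
    PureHorn (starCNF S T) := by
  simp only [PureHorn, starCNF, Finset.forall_mem_image, Finset.mem_sdiff]
  exact fun _ hv => ⟨hS, hv.2⟩

theorem subset_hornClosure_starCNF (S T : Finset V) : ↑T ⊆ hornClosure (starCNF S T) ↑S := by
  intro v hv W hW
  by_cases hvS : v ∈ S
  · exact subset_hornClosure _ _ hvS W hW
  · exact hW.2 (S, v) (Finset.mem_image_of_mem _ (Finset.mem_sdiff.2 ⟨hv, hvS⟩)) hW.1

theorem price_sizeC_eq_card_sdiff {𝓑 : Finset (Finset V)} {S : Finset V} (hS : S.Nonempty)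
    (hS𝓑 : S ∈ 𝓑) (T : Finset V) : price sizeC 𝓑 S T = (T \ S).card := by
  refine IsLeast.csInf_eq ⟨?_, ?_⟩
  · refine ⟨starCNF S T, pureHorn_starCNF hS T, ?_, subset_hornClosure_starCNF S T,
      card_starCNF S T⟩
    simp only [starCNF, Finset.forall_mem_image]
    exact fun _ _ => hS𝓑
  · rintro _ ⟨Φ, -, -, hT, rfl⟩
    exact card_sdiff_le_card_of_subset_hornClosure hT

theorem stmt6_general {V : Type*} [DecidableEq V]
    (𝓑 : Finset (Finset V))
    (hne : ∀ B ∈ 𝓑, B.Nonempty)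
    (B B' : Finset V) (hB : B ∈ 𝓑) :
    price sizeC 𝓑 B B' = (B' \ B).card :=
  price_sizeC_eq_card_sdiff (hne B hB) hB B'

/-- `price_C(B, B') = |B' \ B|` for all bodies `B, B' ∈ 𝓑`. -/
theorem stmt6 {V : Type*} [Fintype V] [DecidableEq V]
    (𝓑 : Finset (Finset V))
    (hne : ∀ B ∈ 𝓑, B.Nonempty) (hproper : ∀ B ∈ 𝓑, B ≠ Finset.univ)
    (hsperner : ∀ B ∈ 𝓑, ∀ B' ∈ 𝓑, B ⊆ B' → B = B')
    (hcover : ∀ v : V, ∃ B ∈ 𝓑, v ∈ B)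
    (hinter : ∀ v : V, ∃ B ∈ 𝓑, v ∉ B)
    (B B' : Finset V) (hB : B ∈ 𝓑) (hB' : B' ∈ 𝓑) :
    price sizeC 𝓑 B B' = (B' \ B).card :=
  stmt6_general 𝓑 hne B B' hB
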